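/- arXiv:1910.11453 — 5 statements merged into one kernel-verified Lean document; each statement's English description precedes it below -/
import Mathlib

section
/- Let K be a group generated by e elements and let N be a finite normal subgroup of K. If k_1, …, k_e ∈ K are elements such that the cosets k_1N, …, k_eN generate the quotient group K/N, then there exist n_1, …, n_e ∈ N such that the elements k_1n_1, …, k_en_e generate K. -/
/-!
Gaschütz's counting argument. For a subgroup `H` with `H ⊔ N = ⊤`, let `φ_k(H)` be the number of
tuples `n ∈ N^e` with `⟨k i * n i⟩ = H`. Each coset `k i * N` meets `H` in a coset of `H ⊓ N`, so
exactly `|H ⊓ N|^e` tuples `n` put every `k i * n i` into `H`; sorting them by the subgroup they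
generate gives `|H ⊓ N|^e = ∑_{H' ≤ H} φ_k(H')`. Subgroups `H'` with `H' ⊔ N ≠ ⊤` never occur,
and for the others `H' < H` forces `H' ⊓ N < H ⊓ N`, so induction on `|H ⊓ N|` shows that
`φ_k(H)` is the same for all `k` generating `K` modulo `N`. Taking for `k` a generating tuple of
`K` gives `φ_k(K) ≥ 1`.
-/

open Function Set Subgroup Pointwise

theorem Nat.card_subtype_mem_eq_finsum_card_fiber {α β : Type*} [Finite α] (c : α → β)
    (s : Set β) : Nat.card {a // c a ∈ s} = ∑ᶠ b ∈ s, Nat.card {a // c a = b} := by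
  classical
  have := Fintype.ofFinite α
  let t : Finset β := (Finset.univ.image c).filter (· ∈ s)
  have hsupp : s ∩ support (fun b => Nat.card {a // c a = b}) ⊆ t := by
    rintro b ⟨hb, hne⟩
    obtain ⟨⟨a, rfl⟩, -⟩ := Nat.card_ne_zero.1 hne
    simpa [t] using hb
  rw [finsum_mem_eq_sum_of_subset _ hsupp fun b hb => (Finset.mem_filter.1 hb).2,
    Nat.card_eq_fintype_card, Fintype.card_subtype,
    Finset.card_eq_sum_card_fiberwise (f := c) (t := t) (by intro a ha; simpa [t] using ha)]
  refine Finset.sum_congr rfl fun b hb => ?_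
  have hbs : b ∈ s := (Finset.mem_filter.1 hb).2
  rw [Nat.card_eq_fintype_card, Fintype.card_subtype, Finset.filter_filter]
  congr 1
  ext a
  simp +contextual [hbs]

theorem Nat.finite_support_card_fiber {α β : Type*} [Finite α] (c : α → β) :
    (support fun b => Nat.card {a // c a = b}).Finite :=
  (finite_range c).subset fun b hb => by
    obtain ⟨⟨a, rfl⟩, -⟩ := Nat.card_ne_zero.1 hb
    exact mem_range_self a

namespace Subgroup

variable {K : Type*} [Group K] {N H H' : Subgroup K} [N.Normal]

theorem card_lt_card_of_lt [Finite H] (h : H' < H) : Nat.card H' < Nat.card H :=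
  (card_le_of_le h.le).lt_of_ne fun hc => h.ne (eq_of_le_of_card_ge h.le hc.ge)

theorem exists_mul_eq_of_sup_eq_top (hH : H ⊔ N = ⊤) (g : K) :
    ∃ h ∈ H, ∃ m ∈ N, h * m = g :=
  Set.mem_mul.1 (by rw [← mul_normal, hH]; trivial)

theorem card_subtype_mul_mem_eq (hH : H ⊔ N = ⊤) (g : K) :
    Nat.card {n : N // g * n ∈ H} = Nat.card (H ⊓ N : Subgroup K) := by
  obtain ⟨h, hh, m, hm, rfl⟩ := exists_mul_eq_of_sup_eq_top hH g
  have key (n : K) : h * m * n ∈ H ↔ m * n ∈ H := by rw [mul_assoc, H.mul_mem_cancel_left hh]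
  exact Nat.card_congr
    { toFun n := ⟨m * n, mem_inf.2 ⟨(key _).1 n.2, N.mul_mem hm n.1.2⟩⟩
      invFun x := ⟨⟨m⁻¹ * x, N.mul_mem (N.inv_mem hm) (mem_inf.1 x.2).2⟩,
        (key _).2 (by simpa using (mem_inf.1 x.2).1)⟩
      left_inv n := by ext; simp
      right_inv x := by ext; simp }

theorem card_subtype_forall_mul_mem_eq {ι : Type*} [Fintype ι] (hH : H ⊔ N = ⊤) (k : ι → K) :
    Nat.card {n : ι → N // ∀ i, k i * n i ∈ H} =
      Nat.card (H ⊓ N : Subgroup K) ^ Fintype.card ι := by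
  rw [Nat.card_congr (Equiv.subtypePiEquivPi (p := fun i (n : N) => k i * n ∈ H)), Nat.card_pi]
  simp [card_subtype_mul_mem_eq hH]

theorem inf_lt_inf_of_lt_of_sup_eq_top (hlt : H' < H) (hsup : H' ⊔ N = ⊤) :
    H' ⊓ N < H ⊓ N := by
  refine lt_of_le_of_ne (inf_le_inf_right _ hlt.le) fun hinf => hlt.not_ge fun h hh => ?_
  obtain ⟨a, ha, m, hm, rfl⟩ := exists_mul_eq_of_sup_eq_top hsup h
  have : m ∈ H ⊓ N := mem_inf.2 ⟨(H.mul_mem_cancel_left (hlt.le ha)).1 hh, hm⟩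
  exact H'.mul_mem ha (hinf ▸ this).1

end Subgroup

namespace Gaschutz

variable {K ι : Type*} [Group K]

variable (N : Subgroup K) in
noncomputable def correctionCount (k : ι → K) (H : Subgroup K) : ℕ :=
  Nat.card {n : ι → N // closure (range fun i => k i * n i) = H}

variable {N H : Subgroup K} {k k' : ι → K}

theorem card_subtype_forall_mul_mem_eq_add [Finite ι] [Finite N] :
    Nat.card {n : ι → N // ∀ i, k i * n i ∈ H} =
      correctionCount N k H + ∑ᶠ H' ∈ Iio H, correctionCount N k H' := by
  let c (n : ι → N) : Subgroup K := closure (range fun i => k i * n i)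
  have hle (n : ι → N) : (∀ i, k i * n i ∈ H) ↔ c n ∈ Iic H := by
    simp [c, closure_le, range_subset_iff]
  rw [Nat.card_congr (Equiv.subtypeEquivRight hle), Nat.card_subtype_mem_eq_finsum_card_fiber,
    ← Iio_insert, finsum_mem_insert' _ self_notMem_Iio
      ((Nat.finite_support_card_fiber c).inter_of_right _)]
  rfl

variable [N.Normal]

theorem map_mk_closure_range_mul (k : ι → K) (n : ι → N) :
    (closure (range fun i => k i * n i)).map (QuotientGroup.mk' N) =
      closure (range fun i => (k i : K ⧸ N)) := by
  rw [MonoidHom.map_closure, ← range_comp]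
  congr 2
  ext i
  exact QuotientGroup.mk_mul_of_mem (k i) (n i).2

theorem closure_range_mul_sup_eq_top (hk : closure (range fun i => (k i : K ⧸ N)) = ⊤)
    (n : ι → N) : closure (range fun i => k i * n i) ⊔ N = ⊤ := by
  have := congrArg (comap (QuotientGroup.mk' N)) ((map_mk_closure_range_mul k n).trans hk)
  rwa [comap_map_eq, QuotientGroup.ker_mk', comap_top] at this

theorem correctionCount_eq_zero (hk : closure (range fun i => (k i : K ⧸ N)) = ⊤)
    (hH : H ⊔ N ≠ ⊤) : correctionCount N k H = 0 :=
  Nat.card_eq_zero.2 <| .inl ⟨fun n => hH (n.2 ▸ closure_range_mul_sup_eq_top hk n.1)⟩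

theorem correctionCount_eq_of_closure_eq_top [Fintype ι] [Finite N]
    (hk : closure (range fun i => (k i : K ⧸ N)) = ⊤)
    (hk' : closure (range fun i => (k' i : K ⧸ N)) = ⊤) (hH : H ⊔ N = ⊤) :
    correctionCount N k H = correctionCount N k' H := by
  induction hc : Nat.card (H ⊓ N : Subgroup K) using Nat.strong_induction_on generalizing H with
  | _ c ih =>
  have : Finite (H ⊓ N : Subgroup K) :=
    Finite.of_injective _ (Subgroup.inclusion_injective inf_le_right)
  have hsum : ∑ᶠ H' ∈ Iio H, correctionCount N k H' =
      ∑ᶠ H' ∈ Iio H, correctionCount N k' H' := by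
    refine finsum_mem_congr rfl fun H' (hlt : H' < H) => ?_
    by_cases hH' : H' ⊔ N = ⊤
    · exact ih _ (hc ▸ card_lt_card_of_lt (inf_lt_inf_of_lt_of_sup_eq_top hlt hH')) hH' rfl
    · rw [correctionCount_eq_zero hk hH', correctionCount_eq_zero hk' hH']
  have e := card_subtype_forall_mul_mem_eq hH k
  have e' := card_subtype_forall_mul_mem_eq hH k'
  rw [card_subtype_forall_mul_mem_eq_add] at e e'
  omega

end Gaschutz

theorem stmt_0_general (e : ℕ) (K : Type*) [Group K]
    (hK : ∃ f : Fin e → K, Subgroup.closure (Set.range f) = ⊤)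
    (N : Subgroup K) [N.Normal] (hN : (N : Set K).Finite)
    (k : Fin e → K)
    (hk : Subgroup.closure (Set.range fun i => ((k i : K) : K ⧸ N)) = ⊤) :
    ∃ n : Fin e → K, (∀ i, n i ∈ N) ∧
      Subgroup.closure (Set.range fun i => k i * n i) = ⊤ := by
  have : Finite N := hN.to_subtype
  obtain ⟨f, hf⟩ := hK
  have hf' : closure (range fun i => (f i : K ⧸ N)) = ⊤ := by
    rw [← Gaschutz.map_mk_closure_range_mul f 1]
    simpa [hf] using map_top_of_surjective _ (QuotientGroup.mk'_surjective N)
  have hpos : Gaschutz.correctionCount N f ⊤ ≠ 0 :=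
    Nat.card_ne_zero.2 ⟨⟨1, by simpa using hf⟩, inferInstance⟩
  rw [Gaschutz.correctionCount_eq_of_closure_eq_top hf' hk (by simp)] at hpos
  obtain ⟨n, hn⟩ := (Nat.card_ne_zero.1 hpos).1
  exact ⟨fun i => n i, fun i => (n i).2, hn⟩

/-- **Gaschütz's lemma.** If `K` is a group generated by `e` elements, `N` is a finite normal
subgroup, and the cosets `k i * N` generate `K ⧸ N`, then the `k i` can be corrected by elements
`n i ∈ N` so that the `k i * n i` generate `K`. -/
theorem stmt_0 (e : ℕ) (he : 0 < e) (K : Type*) [Group K]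
    (hK : ∃ f : Fin e → K, Subgroup.closure (Set.range f) = ⊤)
    (N : Subgroup K) [N.Normal] (hN : (N : Set K).Finite)
    (k : Fin e → K)
    (hk : Subgroup.closure (Set.range fun i => ((k i : K) : K ⧸ N)) = ⊤) :
    ∃ n : Fin e → K, (∀ i, n i ∈ N) ∧
      Subgroup.closure (Set.range fun i => k i * n i) = ⊤ :=
  stmt_0_general e K hK N hN k hk
end

section
/- Let p be a prime and let H be a finite group generated by e elements. Then there exist a finite group Ĥ generated by e elements and a surjective homomorphism π: Ĥ → H whose kernel is an elementary abelian p-group, such that for every finite group L generated by e elements and every surjective homomorphism τ: L → H whose kernel is an elementary abelian p-group, there exists a surjective homomorphism σ: Ĥ → L with τ ∘ σ = π. -/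
/-- An `e`-generated finite extension of `H` by an elementary abelian `p`-group:
a finite `e`-generated group together with a surjection onto `H` whose kernel is
abelian with every element of order dividing `p`. -/
structure PElemAbExtension (e p : ℕ) (H : Type) [Group H] where
  carrier : Type
  [grp : Group carrier]
  [fin : Finite carrier]
  proj : carrier →* H
  gen : ∃ f : Fin e → carrier, Subgroup.closure (Set.range f) = ⊤
  surj : Function.Surjective proj
  ker_comm : ∀ a b : proj.ker, a * b = b * a
  ker_exp : ∀ g : proj.ker, g ^ p = 1

attribute [instance] PElemAbExtension.grp PElemAbExtension.fin

/-!
Let `F` be free on `e` letters, `φ : F → H` send them to generators of `H`, and `N = ker φ`.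
The cover is `F / N^p [N, N]`. It is finite: `N` has finite index in the finitely generated
group `F`, so `N / N^p [N, N]` is a finitely generated abelian group of exponent `p`.
Given `τ : L → H`, Gaschütz's lemma lifts the generators of `H` to generators of `L`; the
induced surjection `ψ : F → L` satisfies `τ ∘ ψ = φ`, so it maps `N` into the elementary
abelian kernel of `τ` and kills `N^p [N, N]`.
-/

open Subgroup Function Set
open scoped commutatorElement

theorem FreeGroup.lift_surjective_of_closure_range_eq_top {ι G : Type*} [Group G] {x : ι → G}
    (hx : closure (range x) = ⊤) : Surjective (FreeGroup.lift x) := by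
  rw [← MonoidHom.range_eq_top, FreeGroup.range_lift_eq_closure, hx]

theorem closure_range_comp_eq_top {ι G M : Type*} [Group G] [Group M] {f : G →* M}
    (hf : Surjective f) {x : ι → G} (hx : closure (range x) = ⊤) :
    closure (range (f ∘ x)) = ⊤ := by
  rw [range_comp, ← MonoidHom.map_closure, hx, ← MonoidHom.range_eq_map,
    MonoidHom.range_eq_top.2 hf]

section Gaschutz

variable {ι L H : Type*} [Group L] [Group H] (τ : L →* H)

def liftsInto (h : ι → H) (U : Subgroup L) : Set (ι → L) :=
  {x | τ ∘ x = h ∧ ∀ i, x i ∈ U}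

def generatingLifts (h : ι → H) (U : Subgroup L) : Set (ι → L) :=
  {x | τ ∘ x = h ∧ closure (range x) = U}

def liftsIntoEquivSigma (h : ι → H) (U : Subgroup L) :
    liftsInto τ h U ≃ Σ V : Iic U, generatingLifts τ h V where
  toFun x :=
    ⟨⟨closure (range x.1), (closure_le _).2 (range_subset_iff.2 x.2.2)⟩, x.1, x.2.1, rfl⟩
  invFun y := ⟨y.2.1, y.2.2.1, fun i => y.1.2 (y.2.2.2.le (subset_closure (mem_range_self i)))⟩
  left_inv _ := rfl
  right_inv := by
    rintro ⟨⟨V, hV⟩, x, hx, hxV⟩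
    simp only at hxV
    subst hxV
    rfl

noncomputable def liftsIntoEquivOne {h : ι → H} {U : Subgroup L} (hh : ∀ i, h i ∈ U.map τ) :
    liftsInto τ h U ≃ liftsInto τ (1 : ι → H) U := by
  choose u hu hτu using hh
  refine (Equiv.mulRight u⁻¹).subtypeEquiv fun x => ?_
  simp only [liftsInto, mem_ofPred_eq, Equiv.coe_mulRight, funext_iff, comp_apply, Pi.mul_apply,
    Pi.inv_apply, Pi.one_apply, map_mul, map_inv, hτu, mul_inv_eq_one,
    mul_mem_cancel_right (inv_mem (hu _))]

theorem liftsInto_eq_empty {h : ι → H} {U : Subgroup L} {i : ι} (hi : h i ∉ U.map τ) :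
    liftsInto τ h U = ∅ :=
  eq_empty_of_forall_notMem fun x hx => hi ⟨x i, hx.2 i, congr_fun hx.1 i⟩

theorem card_liftsInto_eq {h h' : ι → H} (hh : closure (range h) = ⊤)
    (hh' : closure (range h') = ⊤) (U : Subgroup L) :
    Nat.card (liftsInto τ h U) = Nat.card (liftsInto τ h' U) := by
  by_cases hU : U.map τ = ⊤
  · exact (Nat.card_congr (liftsIntoEquivOne τ fun i => hU ▸ mem_top (h i))).trans
      (Nat.card_congr (liftsIntoEquivOne τ fun i => hU ▸ mem_top (h' i))).symm
  · have hempty {k : ι → H} (hk : closure (range k) = ⊤) : liftsInto τ k U = ∅ := by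
      obtain ⟨i, hi⟩ : ∃ i, k i ∉ U.map τ := by
        by_contra! hall
        exact hU (eq_top_iff.2 (hk ▸ (closure_le _).2 (range_subset_iff.2 hall)))
      exact liftsInto_eq_empty τ hi
    rw [hempty hh, hempty hh']

variable [Finite ι] [Finite L]

/-- Gaschütz's counting argument: the lifts landing in `U` are counted independently of `h`, and
they split according to the subgroup `V ≤ U` they generate; conclude by induction on `U`. -/
theorem card_generatingLifts_eq {h h' : ι → H} (hh : closure (range h) = ⊤)
    (hh' : closure (range h') = ⊤) (U : Subgroup L) :
    Nat.card (generatingLifts τ h U) = Nat.card (generatingLifts τ h' U) := by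
  classical
  induction U using WellFoundedLT.induction with
  | _ U ih =>
  have := Fintype.ofFinite (Iic U)
  let top : Iic U := ⟨U, mem_Iic.2 le_rfl⟩
  have hsum (k : ι → H) : Nat.card (liftsInto τ k U) = Nat.card (generatingLifts τ k U) +
      ∑ V : {V // V ≠ top}, Nat.card (generatingLifts τ k V.1.1) := by
    rw [Nat.card_congr (liftsIntoEquivSigma τ k U), Nat.card_sigma,
      Fintype.sum_eq_add_sum_subtype_ne _ top]
  have hrest : ∑ V : {V // V ≠ top}, Nat.card (generatingLifts τ h V.1.1) =
      ∑ V : {V // V ≠ top}, Nat.card (generatingLifts τ h' V.1.1) :=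
    Finset.sum_congr rfl fun V _ =>
      ih _ (lt_of_le_of_ne V.1.2 fun hV => V.2 (Subtype.ext hV))
  have := card_liftsInto_eq τ hh hh' U
  rw [hsum, hsum, hrest] at this
  omega

theorem exists_generating_lift (hτ : Surjective τ) {x : ι → L} (hx : closure (range x) = ⊤)
    {h : ι → H} (hh : closure (range h) = ⊤) :
    ∃ y : ι → L, τ ∘ y = h ∧ closure (range y) = ⊤ := by
  have : Nonempty (generatingLifts τ (τ ∘ x) ⊤) := ⟨⟨x, rfl, hx⟩⟩
  have hpos : 0 < Nat.card (generatingLifts τ (τ ∘ x) ⊤) := Nat.card_pos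
  rw [card_generatingLifts_eq τ (closure_range_comp_eq_top hτ hx) hh] at hpos
  obtain ⟨⟨y, hy⟩⟩ := (Nat.card_pos_iff.1 hpos).1
  exact ⟨y, hy⟩

end Gaschutz

section ElemAbKernel

variable {G : Type*} [Group G]

def elemAbKernel (N : Subgroup G) (p : ℕ) : Subgroup G :=
  normalClosure ({g | ∃ n ∈ N, n ^ p = g} ∪ {g | ∃ a ∈ N, ∃ b ∈ N, ⁅a, b⁆ = g})

variable {N : Subgroup G} {p : ℕ}

instance : (elemAbKernel N p).Normal := normalClosure_normal

theorem pow_mem_elemAbKernel {n : G} (hn : n ∈ N) : n ^ p ∈ elemAbKernel N p :=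
  subset_normalClosure (Or.inl ⟨n, hn, rfl⟩)

theorem commutatorElement_mem_elemAbKernel {a b : G} (ha : a ∈ N) (hb : b ∈ N) :
    ⁅a, b⁆ ∈ elemAbKernel N p :=
  subset_normalClosure (Or.inr ⟨a, ha, b, hb, rfl⟩)

theorem elemAbKernel_le [N.Normal] : elemAbKernel N p ≤ N :=
  normalClosure_le_normal <| by
    rintro _ (⟨n, hn, rfl⟩ | ⟨a, ha, b, hb, rfl⟩)
    · exact pow_mem hn p
    · exact commutator_le_left N N (commutator_mem_commutator ha hb)

theorem elemAbKernel_le_ker {M : Type*} [Group M] {f : G →* M}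
    (hcomm : ∀ a ∈ N, ∀ b ∈ N, Commute (f a) (f b)) (hpow : ∀ a ∈ N, f a ^ p = 1) :
    elemAbKernel N p ≤ f.ker :=
  normalClosure_le_normal <| by
    rintro _ (⟨n, hn, rfl⟩ | ⟨a, ha, b, hb, rfl⟩)
    · rw [SetLike.mem_coe, MonoidHom.mem_ker, map_pow, hpow n hn]
    · rw [SetLike.mem_coe, MonoidHom.mem_ker, map_commutatorElement,
        commutatorElement_eq_one_iff_mul_comm]
      exact hcomm a ha b hb

end ElemAbKernel

section ElemAbCover

variable {G H : Type*} [Group G] [Group H] (φ : G →* H) (p : ℕ)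

abbrev ElemAbCover : Type _ := G ⧸ elemAbKernel φ.ker p

namespace ElemAbCover

def proj : ElemAbCover φ p →* H := QuotientGroup.lift _ φ elemAbKernel_le

theorem proj_surjective (hφ : Surjective φ) : Surjective (proj φ p) :=
  QuotientGroup.lift_surjective_of_surjective _ _ hφ _

theorem exists_mk_of_mem_ker {q : ElemAbCover φ p} (hq : q ∈ (proj φ p).ker) :
    ∃ n ∈ φ.ker, (n : ElemAbCover φ p) = q := by
  obtain ⟨n, rfl⟩ := QuotientGroup.mk_surjective q
  exact ⟨n, hq, rfl⟩

theorem ker_proj_comm (a b : (proj φ p).ker) : a * b = b * a := by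
  obtain ⟨n, hn, hna⟩ := exists_mk_of_mem_ker φ p a.2
  obtain ⟨m, hm, hmb⟩ := exists_mk_of_mem_ker φ p b.2
  refine Subtype.ext ?_
  change (a : ElemAbCover φ p) * b = b * a
  have hnm : ((⁅n, m⁆ : G) : ElemAbCover φ p) = 1 :=
    (QuotientGroup.eq_one_iff _).2 (commutatorElement_mem_elemAbKernel hn hm)
  rwa [← QuotientGroup.mk'_apply, map_commutatorElement, commutatorElement_eq_one_iff_mul_comm,
    QuotientGroup.mk'_apply, QuotientGroup.mk'_apply, hna, hmb] at hnm

theorem ker_proj_pow_eq_one (g : (proj φ p).ker) : g ^ p = 1 := by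
  obtain ⟨n, hn, hng⟩ := exists_mk_of_mem_ker φ p g.2
  refine Subtype.ext ?_
  change (g : ElemAbCover φ p) ^ p = 1
  rw [← hng, ← QuotientGroup.mk_pow, QuotientGroup.eq_one_iff]
  exact pow_mem_elemAbKernel hn

theorem finite [Group.FG G] [Finite H] (hp : p ≠ 0) : Finite (ElemAbCover φ p) := by
  have : Finite (G ⧸ φ.ker) := Finite.of_injective _ (QuotientGroup.kerLift_injective φ)
  have : φ.ker.FiniteIndex := finiteIndex_of_finite_quotient
  have : Group.FG φ.ker := fg_of_index_ne_zero _
  let toKer : φ.ker →* (proj φ p).ker :=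
    ((QuotientGroup.mk' _).comp φ.ker.subtype).codRestrict _ fun n => n.2
  have : Group.FG (proj φ p).ker := Group.fg_of_surjective (f := toKer) fun q => by
    obtain ⟨n, hn, hnq⟩ := exists_mk_of_mem_ker φ p q.2
    exact ⟨⟨n, hn⟩, Subtype.ext hnq⟩
  let _ : CommGroup (proj φ p).ker := { mul_comm := ker_proj_comm φ p }
  have : Finite (proj φ p).ker := CommGroup.finite_of_fg_isMulTorsion _ fun g =>
    isOfFinOrder_iff_pow_eq_one.2 ⟨p, Nat.pos_of_ne_zero hp, ker_proj_pow_eq_one φ p g⟩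
  exact (MonoidHom.finite_iff_finite_ker_range _).2 ⟨this, inferInstance⟩

theorem exists_surjective_lift {L : Type*} [Group L] (τ : L →* H) {ψ : G →* L}
    (hψ : Surjective ψ) (hτψ : τ.comp ψ = φ) (hcomm : ∀ a b : τ.ker, a * b = b * a)
    (hpow : ∀ g : τ.ker, g ^ p = 1) :
    ∃ σ : ElemAbCover φ p →* L, Surjective σ ∧ τ.comp σ = proj φ p := by
  have hψ_ker (n : G) (hn : n ∈ φ.ker) : ψ n ∈ τ.ker := by
    rwa [MonoidHom.mem_ker, ← MonoidHom.comp_apply, hτψ]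
  have hK : elemAbKernel φ.ker p ≤ ψ.ker := elemAbKernel_le_ker
    (fun a ha b hb => congrArg Subtype.val (hcomm ⟨_, hψ_ker a ha⟩ ⟨_, hψ_ker b hb⟩))
    (fun a ha => congrArg Subtype.val (hpow ⟨_, hψ_ker a ha⟩))
  exact ⟨QuotientGroup.lift _ ψ hK, QuotientGroup.lift_surjective_of_surjective _ _ hψ _,
    QuotientGroup.monoidHom_ext _ hτψ⟩

end ElemAbCover

end ElemAbCover

theorem stmt_1_general (e p : ℕ) (hp : p.Prime) (H : Type) [Group H] [Finite H]
    (hH : ∃ f : Fin e → H, Subgroup.closure (Set.range f) = ⊤) :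
    ∃ C : PElemAbExtension e p H,
      ∀ (L : Type) [Group L] [Finite L] (τ : L →* H),
        (∃ f : Fin e → L, Subgroup.closure (Set.range f) = ⊤) →
        Function.Surjective τ →
        (∀ a b : τ.ker, a * b = b * a) →
        (∀ g : τ.ker, g ^ p = 1) →
        ∃ σ : C.carrier →* L, Function.Surjective σ ∧ τ.comp σ = C.proj := by
  obtain ⟨h, hh⟩ := hH
  let φ : FreeGroup (Fin e) →* H := FreeGroup.lift h
  have := ElemAbCover.finite φ p hp.ne_zero
  have hgen := closure_range_comp_eq_top (QuotientGroup.mk'_surjective (elemAbKernel φ.ker p))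
    (FreeGroup.closure_range_of (Fin e))
  refine ⟨⟨ElemAbCover φ p, ElemAbCover.proj φ p, ⟨_, hgen⟩,
    ElemAbCover.proj_surjective φ p (FreeGroup.lift_surjective_of_closure_range_eq_top hh),
    ElemAbCover.ker_proj_comm φ p, ElemAbCover.ker_proj_pow_eq_one φ p⟩, ?_⟩
  intro L _ _ τ ⟨y, hy⟩ hτ hcomm hpow
  obtain ⟨x, hτx, hx⟩ := exists_generating_lift τ hτ hy hh
  refine ElemAbCover.exists_surjective_lift φ p τ
    (FreeGroup.lift_surjective_of_closure_range_eq_top hx) ?_ hcomm hpow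
  refine FreeGroup.ext_hom _ _ fun i => ?_
  simpa [φ] using congr_fun hτx i

/-- **Existence of the `p`-cover of rank `e`.** For every finite `e`-generated group `H` and
prime `p` there is a finite `e`-generated extension `Ĥ → H` with elementary abelian `p`-group
kernel, through which every other such extension of `H` factors. -/
theorem stmt_1 (e p : ℕ) (he : 0 < e) (hp : p.Prime) (H : Type) [Group H] [Finite H]
    (hH : ∃ f : Fin e → H, Subgroup.closure (Set.range f) = ⊤) :
    ∃ C : PElemAbExtension e p H,
      ∀ (L : Type) [Group L] [Finite L] (τ : L →* H),
        (∃ f : Fin e → L, Subgroup.closure (Set.range f) = ⊤) →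
        Function.Surjective τ →
        (∀ a b : τ.ker, a * b = b * a) →
        (∀ g : τ.ker, g ^ p = 1) →
        ∃ σ : C.carrier →* L, Function.Surjective σ ∧ τ.comp σ = C.proj :=
  stmt_1_general e p hp H hH
end

section
/- Let F be the free group on e generators and let H be a finite group. If ψ_1, ψ_2: F → H are surjective homomorphisms with kernels M^1 = ker ψ_1 and M^2 = ker ψ_2, then the quotient groups F/(M^1)_p and F/(M^2)_p are isomorphic. -/
open scoped commutatorElement

/-- For a subgroup `N` of `F`, `subgroupP p N = [N,N]·N^{[p]}` is the subgroup generated by all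
commutators `⁅a,b⁆` with `a b ∈ N` and all `p`-th powers `a ^ p` with `a ∈ N`. -/
def subgroupP (p : ℕ) {F : Type*} [Group F] (N : Subgroup F) : Subgroup F :=
  Subgroup.closure ({x | ∃ a ∈ N, ∃ b ∈ N, x = ⁅a, b⁆} ∪ {x | ∃ a ∈ N, x = a ^ p})

instance subgroupP_normal (p : ℕ) {F : Type*} [Group F] (N : Subgroup F) [hN : N.Normal] :
    (subgroupP p N).Normal := by
  constructor
  intro n hn g
  have h1 : (subgroupP p N).map (MulAut.conj g).toMonoidHom ≤ subgroupP p N := by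
    rw [subgroupP, MonoidHom.map_closure]
    apply Subgroup.closure_mono
    rintro x ⟨y, hy, rfl⟩
    rcases hy with ⟨a, ha, b, hb, rfl⟩ | ⟨a, ha, rfl⟩
    · exact Or.inl ⟨g * a * g⁻¹, hN.conj_mem a ha g, g * b * g⁻¹, hN.conj_mem b hb g,
        by simp [map_commutatorElement]⟩
    · exact Or.inr ⟨g * a * g⁻¹, hN.conj_mem a ha g, by simp [map_pow]⟩
  exact h1 ⟨n, hn, rfl⟩

/-! By Gaschütz's lemma, the images under `ψ₂` of the free generators lift through the
surjection `F ⧸ (M¹)_p → H` to a generating tuple of `F ⧸ (M¹)_p`. The induced map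
`θ : F → F ⧸ (M¹)_p` is onto and carries `M²` into the kernel `M¹ ⧸ (M¹)_p`, which is abelian of
exponent `p`, so `θ` kills `(M²)_p`. This gives surjections in both directions between
`F ⧸ (M¹)_p` and `F ⧸ (M²)_p`, which are finite (by Schreier `M` is finitely generated, so
`M ⧸ M_p` is a finitely generated abelian torsion group), hence isomorphic.

Gaschütz's lemma is proved by counting: for `U ≤ G` with `f U = H`, the number of tuples in `U`
lifting a tuple of `H` does not depend on the tuple; by induction over the subgroups of `U`,
neither does the number of those lifts that generate exactly `U`, as long as the tuple
generates `H`. -/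

section SubgroupP

variable {F G : Type*} [Group F] [Group G] (p : ℕ)

lemma subgroupP_le (N : Subgroup F) : subgroupP p N ≤ N := by
  rw [subgroupP, Subgroup.closure_le]
  rintro x (⟨a, ha, b, hb, rfl⟩ | ⟨a, ha, rfl⟩)
  · exact Subgroup.commutator_le_self N (Subgroup.commutator_mem_commutator ha hb)
  · exact N.pow_mem ha p

lemma subgroupP_mono {N N' : Subgroup F} (h : N ≤ N') : subgroupP p N ≤ subgroupP p N' := by
  refine Subgroup.closure_mono ?_
  rintro x (⟨a, ha, b, hb, rfl⟩ | ⟨a, ha, rfl⟩)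
  · exact Or.inl ⟨a, h ha, b, h hb, rfl⟩
  · exact Or.inr ⟨a, h ha, rfl⟩

lemma map_subgroupP (f : F →* G) (N : Subgroup F) :
    (subgroupP p N).map f = subgroupP p (N.map f) := by
  rw [subgroupP, subgroupP, MonoidHom.map_closure, Set.image_union]
  congr 2 <;> ext x
  · constructor
    · rintro ⟨_, ⟨a, ha, b, hb, rfl⟩, rfl⟩
      exact ⟨f a, ⟨a, ha, rfl⟩, f b, ⟨b, hb, rfl⟩, map_commutatorElement f a b⟩
    · rintro ⟨_, ⟨a, ha, rfl⟩, _, ⟨b, hb, rfl⟩, rfl⟩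
      exact ⟨⁅a, b⁆, ⟨a, ha, b, hb, rfl⟩, map_commutatorElement f a b⟩
  · constructor
    · rintro ⟨_, ⟨a, ha, rfl⟩, rfl⟩
      exact ⟨f a, ⟨a, ha, rfl⟩, map_pow f a p⟩
    · rintro ⟨_, ⟨a, ha, rfl⟩, rfl⟩
      exact ⟨a ^ p, ⟨a, ha, rfl⟩, map_pow f a p⟩

lemma subgroupP_map_mk'_eq_bot (N : Subgroup F) [N.Normal] :
    subgroupP p (N.map (QuotientGroup.mk' (subgroupP p N))) = ⊥ := by
  rw [← map_subgroupP, QuotientGroup.map_mk'_self]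

variable {p}

lemma commutatorElement_mem_subgroupP {N : Subgroup F} {a b : F} (ha : a ∈ N) (hb : b ∈ N) :
    ⁅a, b⁆ ∈ subgroupP p N :=
  Subgroup.subset_closure (Or.inl ⟨a, ha, b, hb, rfl⟩)

lemma pow_mem_subgroupP {N : Subgroup F} {a : F} (ha : a ∈ N) : a ^ p ∈ subgroupP p N :=
  Subgroup.subset_closure (Or.inr ⟨a, ha, rfl⟩)

end SubgroupP

lemma Group.finite_of_fg_of_commute_of_pow_eq_one {Q : Type*} [Group Q] [Group.FG Q] {n : ℕ}
    (hn : n ≠ 0) (hcomm : ∀ a b : Q, a * b = b * a) (hpow : ∀ a : Q, a ^ n = 1) : Finite Q :=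
  letI : CommGroup Q := { mul_comm := hcomm }
  CommGroup.finite_of_fg_isMulTorsion Q fun a =>
    isOfFinOrder_iff_pow_eq_one.2 ⟨n, hn.bot_lt, hpow a⟩

lemma subgroupP_finiteIndex {F : Type*} [Group F] [Group.FG F] {p : ℕ} (hp : p ≠ 0)
    (N : Subgroup F) [N.Normal] [N.FiniteIndex] : (subgroupP p N).FiniteIndex := by
  set K := (subgroupP p N).subgroupOf N
  have : Finite (N ⧸ K) := by
    refine Group.finite_of_fg_of_commute_of_pow_eq_one hp (fun a b => ?_) (fun a => ?_)
    · induction a using QuotientGroup.induction_on with | H a =>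
      induction b using QuotientGroup.induction_on with | H b =>
      rw [← commutatorElement_eq_one_iff_mul_comm]
      exact (map_commutatorElement (QuotientGroup.mk' K) a b).symm.trans
        ((QuotientGroup.eq_one_iff _).2 (commutatorElement_mem_subgroupP a.2 b.2))
    · induction a using QuotientGroup.induction_on with | H a =>
      rw [← QuotientGroup.mk_pow, QuotientGroup.eq_one_iff, Subgroup.mem_subgroupOf,
        Subgroup.coe_pow]
      exact pow_mem_subgroupP a.2
  rw [Subgroup.finiteIndex_iff, ← Subgroup.relIndex_mul_index (subgroupP_le p N)]
  exact mul_ne_zero (Subgroup.index_ne_zero_of_finite (H := K)) Subgroup.FiniteIndex.index_ne_zero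

namespace Gaschutz

open Finset

section Counting

variable {G H ι : Type*} [Group G] [Fintype G] [Group H] [Fintype ι] [DecidableEq ι]

open scoped Classical in
noncomputable def lifts (f : G →* H) (h : ι → H) (U : Subgroup G) : Finset (ι → G) :=
  {g | (∀ i, f (g i) = h i) ∧ ∀ i, g i ∈ U}

open scoped Classical in
noncomputable def generatingLifts (f : G →* H) (h : ι → H) (U : Subgroup G) :
    Finset (ι → G) :=
  {g | (∀ i, f (g i) = h i) ∧ Subgroup.closure (Set.range g) = U}

noncomputable local instance : Fintype (Subgroup G) := Fintype.ofFinite _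

open scoped Classical in
lemma card_lifts_eq_sum (f : G →* H) (h : ι → H) (U : Subgroup G) :
    #(lifts f h U) = ∑ V with V ≤ U, #(generatingLifts f h V) := by
  refine card_eq_sum_card_fiberwise (f := fun g => Subgroup.closure (Set.range g))
    (t := {V | V ≤ U}) ?_ |>.trans ?_
  · intro g hg
    simp only [lifts, coe_filter, mem_univ, true_and, Set.mem_ofPred_eq] at hg
    simpa using (Subgroup.closure_le U).2 (Set.range_subset_iff.2 hg.2)
  refine sum_congr rfl fun V hV => congrArg card ?_
  ext g
  simp only [lifts, generatingLifts, mem_filter, mem_univ, true_and]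
  refine ⟨fun ⟨⟨hf, _⟩, hg⟩ => ⟨hf, hg⟩, fun ⟨hf, hg⟩ => ⟨⟨hf, fun i => ?_⟩, hg⟩⟩
  exact (mem_filter.1 hV).2 (hg ▸ Subgroup.subset_closure (Set.mem_range_self i))

lemma card_lifts_eq_of_map_eq_top (f : G →* H) (h₁ h₂ : ι → H) {U : Subgroup G}
    (hU : U.map f = ⊤) : #(lifts f h₁ U) = #(lifts f h₂ U) := by
  have lift_mem (h : ι → H) (i : ι) : ∃ u ∈ U, f u = h i := by
    simpa using hU.ge (Subgroup.mem_top (h i))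
  choose u hu hfu using lift_mem
  have translate_mem (h h' : ι → H) :
      Set.MapsTo (fun (g : ι → G) i => u h' i * (u h i)⁻¹ * g i) (lifts f h U) (lifts f h' U) := by
    intro g hg
    simp only [lifts, coe_filter, mem_univ, true_and, Set.mem_ofPred_eq] at hg ⊢
    refine ⟨fun i => ?_, fun i => U.mul_mem (U.mul_mem (hu _ i) (U.inv_mem (hu _ i))) (hg.2 i)⟩
    simp [hfu, hg.1 i]
  refine card_nbij' _ _ (translate_mem h₁ h₂) (translate_mem h₂ h₁) ?_ ?_ <;>
    intro g _ <;> funext i <;> group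

lemma generatingLifts_eq_empty (f : G →* H) {h : ι → H}
    (hh : Subgroup.closure (Set.range h) = ⊤) {U : Subgroup G} (hU : U.map f ≠ ⊤) :
    generatingLifts f h U = ∅ := by
  refine eq_empty_of_forall_notMem fun g hg => hU ?_
  simp only [generatingLifts, mem_filter, mem_univ, true_and] at hg
  rw [← hg.2, MonoidHom.map_closure, ← Set.range_comp, show ⇑f ∘ g = h from funext hg.1, hh]

lemma card_generatingLifts_eq (f : G →* H) {h₁ h₂ : ι → H}
    (hh₁ : Subgroup.closure (Set.range h₁) = ⊤) (hh₂ : Subgroup.closure (Set.range h₂) = ⊤)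
    (U : Subgroup G) : #(generatingLifts f h₁ U) = #(generatingLifts f h₂ U) := by
  classical
  induction U using WellFoundedLT.induction with | ind U ih =>
  by_cases hU : U.map f = ⊤
  · have hsplit (h : ι → H) : #(lifts f h U) =
        #(generatingLifts f h U) + ∑ V with V < U, #(generatingLifts f h V) := by
      have : univ.filter (· ≤ U) = insert U (univ.filter (· < U)) := by
        ext V
        simp [le_iff_lt_or_eq, or_comm]
      rw [card_lifts_eq_sum, this, sum_insert (by simp)]
    have := card_lifts_eq_of_map_eq_top f h₁ h₂ hU
    rw [hsplit, hsplit, sum_congr rfl fun V hV => ih V (mem_filter.1 hV).2] at this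
    omega
  · rw [generatingLifts_eq_empty f hh₁ hU, generatingLifts_eq_empty f hh₂ hU]

end Counting

theorem exists_lift_closure_range_eq_top {G H ι : Type*} [Group G] [Finite G] [Group H]
    [Finite ι] {f : G →* H} (hf : Function.Surjective f) {x : ι → G}
    (hx : Subgroup.closure (Set.range x) = ⊤) {h : ι → H}
    (hh : Subgroup.closure (Set.range h) = ⊤) :
    ∃ g : ι → G, f ∘ g = h ∧ Subgroup.closure (Set.range g) = ⊤ := by
  classical
  have := Fintype.ofFinite G
  have := Fintype.ofFinite ι
  have hfx : Subgroup.closure (Set.range (f ∘ x)) = ⊤ := by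
    rw [Set.range_comp, ← MonoidHom.map_closure, hx, ← MonoidHom.range_eq_map,
      MonoidHom.range_eq_top.2 hf]
  have hx_mem : x ∈ generatingLifts f (f ∘ x) ⊤ := by simp [generatingLifts, hx]
  obtain ⟨g, hg⟩ := card_pos.1 (card_generatingLifts_eq f hfx hh ⊤ ▸ card_pos.2 ⟨x, hx_mem⟩)
  simp only [generatingLifts, mem_filter, mem_univ, true_and] at hg
  exact ⟨g, funext hg.1, hg.2⟩

end Gaschutz

lemma FreeGroup.closure_range_comp_of_eq_top {ι G : Type*} [Group G] {φ : FreeGroup ι →* G}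
    (hφ : Function.Surjective φ) : Subgroup.closure (Set.range (φ ∘ FreeGroup.of)) = ⊤ := by
  rw [Set.range_comp, ← MonoidHom.map_closure, FreeGroup.closure_range_of,
    ← MonoidHom.range_eq_map, MonoidHom.range_eq_top.2 hφ]

theorem exists_surjective_quotient_subgroupP {ι H : Type*} [Finite ι] [Group H] [Finite H]
    {p : ℕ} (hp : p ≠ 0) {ψ₁ ψ₂ : FreeGroup ι →* H} (h₁ : Function.Surjective ψ₁)
    (h₂ : Function.Surjective ψ₂) :
    ∃ Θ : FreeGroup ι ⧸ subgroupP p ψ₂.ker →* FreeGroup ι ⧸ subgroupP p ψ₁.ker,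
      Function.Surjective Θ := by
  have := subgroupP_finiteIndex hp ψ₁.ker
  set q := QuotientGroup.lift _ ψ₁ (subgroupP_le p ψ₁.ker)
  have hq : Function.Surjective q := QuotientGroup.lift_surjective_of_surjective _ _ h₁ _
  obtain ⟨g, hg, hg_gen⟩ := Gaschutz.exists_lift_closure_range_eq_top hq
    (FreeGroup.closure_range_comp_of_eq_top (QuotientGroup.mk'_surjective _))
    (FreeGroup.closure_range_comp_of_eq_top h₂)
  set θ := FreeGroup.lift g
  have hθ : q.comp θ = ψ₂ := FreeGroup.ext_hom _ _ fun i => by simpa [θ] using congrFun hg i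
  have hθ_surj : Function.Surjective θ :=
    MonoidHom.range_eq_top.1 (by rw [FreeGroup.range_lift_eq_closure, hg_gen])
  have hker : subgroupP p ψ₂.ker ≤ θ.ker := by
    rw [← Subgroup.map_eq_bot_iff, map_subgroupP, eq_bot_iff,
      ← subgroupP_map_mk'_eq_bot p ψ₁.ker]
    refine subgroupP_mono p ?_
    rw [← QuotientGroup.ker_lift _ ψ₁ (subgroupP_le p _), ← hθ, ← MonoidHom.comap_ker]
    exact Subgroup.map_comap_le _ _
  exact ⟨QuotientGroup.lift _ θ hker, QuotientGroup.lift_surjective_of_surjective _ _ hθ_surj _⟩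

lemma nonempty_mulEquiv_of_surjective {G H : Type*} [MulOneClass G] [MulOneClass H] [Finite G]
    {f : G →* H} {g : H →* G} (hf : Function.Surjective f) (hg : Function.Surjective g) :
    Nonempty (G ≃* H) :=
  have : Finite H := Finite.of_surjective f hf
  ⟨MulEquiv.ofBijective f (hf.bijective_of_nat_card_le (Nat.card_le_card_of_surjective g hg))⟩

theorem stmt_3_general (e p : ℕ) (hp : p.Prime) (H : Type) [Group H] [Finite H]
    (ψ₁ ψ₂ : FreeGroup (Fin e) →* H)
    (h1 : Function.Surjective ψ₁) (h2 : Function.Surjective ψ₂) :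
    Nonempty ((FreeGroup (Fin e) ⧸ subgroupP p ψ₁.ker) ≃*
      (FreeGroup (Fin e) ⧸ subgroupP p ψ₂.ker)) := by
  have := subgroupP_finiteIndex hp.ne_zero ψ₁.ker
  obtain ⟨Θ₁, hΘ₁⟩ := exists_surjective_quotient_subgroupP hp.ne_zero h2 h1
  obtain ⟨Θ₂, hΘ₂⟩ := exists_surjective_quotient_subgroupP hp.ne_zero h1 h2
  exact nonempty_mulEquiv_of_surjective hΘ₁ hΘ₂

/-- **Independence of the `p`-cover from the chosen projection.** If `ψ₁, ψ₂` are two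
surjections from the free group of rank `e` onto the finite group `H`, with kernels
`M¹, M²`, then `F ⧸ (M¹)_p ≅ F ⧸ (M²)_p`. -/
theorem stmt_3 (e p : ℕ) (he : 0 < e) (hp : p.Prime) (H : Type) [Group H] [Finite H]
    (ψ₁ ψ₂ : FreeGroup (Fin e) →* H)
    (h1 : Function.Surjective ψ₁) (h2 : Function.Surjective ψ₂) :
    Nonempty ((FreeGroup (Fin e) ⧸ subgroupP p ψ₁.ker) ≃*
      (FreeGroup (Fin e) ⧸ subgroupP p ψ₂.ker)) :=
  stmt_3_general e p hp H ψ₁ ψ₂ h1 h2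
end

section
/- Let β and γ be normalized 2-cocycles of H with values in V, let D be a group with a surjective homomorphism π: D → E_β, and let r ∈ ℤ_p. For a normalized 2-cocycle δ, let P_δ denote the fiber product of D and E_δ over H with respect to ε_β ∘ π and ε_δ. Then there is a group isomorphism P_γ → P_{rβ+γ} that commutes with the natural projections of both groups onto D. -/
/-! Scaling the `V`-coordinate by `r` is a homomorphism `E_β → E_{rβ}` over `H`, so
`ψ : D → E_{rβ}`, `d ↦ r • π d`, lifts `ε_β ∘ π`. Adding `ψ d` to the `V`-coordinate of
`(d, e) ∈ P_γ` then turns the cocycle `γ` into `rβ + γ`: the product of the shifts picks up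
exactly the cocycle term `rβ(h, h')` that `ψ` carries. -/

/-- A right action of the group `H` on the additive group `V` by additive maps,
written `v^h = ρ.act h v`. Together with a `ZMod p`-module structure on `V` this is
exactly a right `ℤ_p[H]`-module structure. -/
structure RAction (H V : Type) [Group H] [AddCommGroup V] where
  act : H → V →+ V
  act_one : act 1 = AddMonoidHom.id V
  act_mul : ∀ g h : H, act (g * h) = (act h).comp (act g)

namespace RAction

variable {H V : Type} [Group H] [AddCommGroup V]

theorem act_act (ρ : RAction H V) (g h : H) (v : V) :
    ρ.act h (ρ.act g v) = ρ.act (g * h) v := by rw [ρ.act_mul]; rfl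

theorem act_one_apply (ρ : RAction H V) (v : V) : ρ.act 1 v = v := by rw [ρ.act_one]; rfl

theorem act_smul {p : ℕ} [Module (ZMod p) V] (ρ : RAction H V) (h : H) (r : ZMod p) (v : V) :
    ρ.act h (r • v) = r • ρ.act h v := by
  obtain ⟨k, rfl⟩ := ZMod.intCast_surjective r
  exact map_intCast_smul (ρ.act h) (ZMod p) (ZMod p) k v

/-- The diagonal right action on `V × V`. -/
def prodSelf (ρ : RAction H V) : RAction H (V × V) where
  act h := (ρ.act h).prodMap (ρ.act h)
  act_one := by ext x <;> simp [ρ.act_one]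
  act_mul g h := by ext x <;> simp [ρ.act_mul]

end RAction

/-- A normalized 2-cocycle of `H` with values in `V` (w.r.t. the right action `ρ`):
`γ(a,b)^c + γ(ab,c) = γ(b,c) + γ(a,bc)` and `γ(1,·) = γ(·,1) = 0`. -/
structure Cocycle {H V : Type} [Group H] [AddCommGroup V] (ρ : RAction H V) where
  f : H → H → V
  cocyc : ∀ a b c : H, ρ.act c (f a b) + f (a * b) c = f b c + f a (b * c)
  one_left : ∀ h : H, f 1 h = 0
  one_right : ∀ h : H, f h 1 = 0

namespace Cocycle

variable {H V : Type} [Group H] [AddCommGroup V] {ρ : RAction H V}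

/-- The sum of two normalized 2-cocycles. -/
def add (β γ : Cocycle ρ) : Cocycle ρ where
  f a b := β.f a b + γ.f a b
  cocyc a b c := by
    calc ρ.act c (β.f a b + γ.f a b) + (β.f (a * b) c + γ.f (a * b) c)
        = (ρ.act c (β.f a b) + β.f (a * b) c) + (ρ.act c (γ.f a b) + γ.f (a * b) c) := by
          rw [map_add]; abel
      _ = (β.f b c + β.f a (b * c)) + (γ.f b c + γ.f a (b * c)) := by
          rw [β.cocyc, γ.cocyc]
      _ = (β.f b c + γ.f b c) + (β.f a (b * c) + γ.f a (b * c)) := by abel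
  one_left h := by show β.f 1 h + γ.f 1 h = 0; rw [β.one_left, γ.one_left, add_zero]
  one_right h := by show β.f h 1 + γ.f h 1 = 0; rw [β.one_right, γ.one_right, add_zero]

/-- A scalar multiple of a normalized 2-cocycle. -/
def smul {p : ℕ} [Module (ZMod p) V] (r : ZMod p) (β : Cocycle ρ) : Cocycle ρ where
  f a b := r • β.f a b
  cocyc a b c := by
    rw [ρ.act_smul, ← smul_add, ← smul_add, β.cocyc]
  one_left h := by show r • β.f 1 h = 0; rw [β.one_left, smul_zero]
  one_right h := by show r • β.f h 1 = 0; rw [β.one_right, smul_zero]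

/-- The pair of two normalized 2-cocycles, with values in `V × V` with the diagonal action. -/
def pair (β γ : Cocycle ρ) : Cocycle ρ.prodSelf where
  f a b := (β.f a b, γ.f a b)
  cocyc a b c := by
    refine Prod.ext ?_ ?_ <;>
      simp [RAction.prodSelf, β.cocyc, γ.cocyc]
  one_left h := by show (β.f 1 h, γ.f 1 h) = 0; rw [β.one_left, γ.one_left]; rfl
  one_right h := by show (β.f h 1, γ.f h 1) = 0; rw [β.one_right, γ.one_right]; rfl

end Cocycle

/-- The extension of `H` with `V` determined by a normalized 2-cocycle `γ`: the underlying set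
is `H × V` with multiplication `(g,v)·(h,w) = (gh, v^h + w + γ(g,h))`. -/
def GrpExt {H V : Type} [Group H] [AddCommGroup V] (ρ : RAction H V) (γ : Cocycle ρ) : Type :=
  H × V

namespace GrpExt

variable {H V : Type} [Group H] [AddCommGroup V] {ρ : RAction H V} {γ : Cocycle ρ}

instance : Mul (GrpExt ρ γ) :=
  ⟨fun x y => ⟨x.1 * y.1, ρ.act y.1 x.2 + y.2 + γ.f x.1 y.1⟩⟩
instance : One (GrpExt ρ γ) := ⟨⟨1, 0⟩⟩
instance : Inv (GrpExt ρ γ) :=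
  ⟨fun x => ⟨x.1⁻¹, ρ.act x.1⁻¹ (-x.2 - γ.f x.1⁻¹ x.1)⟩⟩

theorem mul_def (x y : GrpExt ρ γ) :
    x * y = ⟨x.1 * y.1, ρ.act y.1 x.2 + y.2 + γ.f x.1 y.1⟩ := rfl

theorem ext' {x y : GrpExt ρ γ} (h1 : x.1 = y.1) (h2 : x.2 = y.2) : x = y := Prod.ext h1 h2

instance : Group (GrpExt ρ γ) where
  mul := (· * ·)
  one := 1
  inv := (·⁻¹)
  mul_assoc x y z := by
    refine ext' (mul_assoc _ _ _) ?_
    show ρ.act z.1 (ρ.act y.1 x.2 + y.2 + γ.f x.1 y.1) + z.2 + γ.f (x.1 * y.1) z.1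
       = ρ.act (y.1 * z.1) x.2 + (ρ.act z.1 y.2 + z.2 + γ.f y.1 z.1) + γ.f x.1 (y.1 * z.1)
    have hc := γ.cocyc x.1 y.1 z.1
    simp only [map_add, ρ.act_act]
    calc ρ.act (y.1 * z.1) x.2 + ρ.act z.1 y.2 + ρ.act z.1 (γ.f x.1 y.1) + z.2
            + γ.f (x.1 * y.1) z.1
        = ρ.act (y.1 * z.1) x.2 + ρ.act z.1 y.2 + z.2
            + (ρ.act z.1 (γ.f x.1 y.1) + γ.f (x.1 * y.1) z.1) := by abel
      _ = ρ.act (y.1 * z.1) x.2 + ρ.act z.1 y.2 + z.2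
            + (γ.f y.1 z.1 + γ.f x.1 (y.1 * z.1)) := by rw [hc]
      _ = ρ.act (y.1 * z.1) x.2 + (ρ.act z.1 y.2 + z.2 + γ.f y.1 z.1)
            + γ.f x.1 (y.1 * z.1) := by abel
  one_mul x := by
    refine ext' (one_mul _) ?_
    show ρ.act x.1 (0 : V) + x.2 + γ.f 1 x.1 = x.2
    rw [map_zero, γ.one_left, zero_add, add_zero]
  mul_one x := by
    refine ext' (mul_one _) ?_
    show ρ.act 1 x.2 + 0 + γ.f x.1 1 = x.2
    rw [ρ.act_one_apply, γ.one_right, add_zero, add_zero]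
  inv_mul_cancel x := by
    refine ext' (inv_mul_cancel _) ?_
    show ρ.act x.1 (ρ.act x.1⁻¹ (-x.2 - γ.f x.1⁻¹ x.1)) + x.2 + γ.f x.1⁻¹ x.1 = 0
    rw [ρ.act_act, inv_mul_cancel, ρ.act_one_apply]
    abel

end GrpExt

/-- The natural epimorphism `ε_γ : E_γ → H`, `(h, v) ↦ h`. -/
def epsHom {H V : Type} [Group H] [AddCommGroup V] (ρ : RAction H V) (γ : Cocycle ρ) :
    GrpExt ρ γ →* H where
  toFun x := x.1
  map_one' := rfl
  map_mul' _ _ := rfl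

/-- The fiber product of two groups over `H`: the subgroup of the direct product consisting
of pairs whose components have equal images in `H`. -/
def fiber2 {A B H : Type} [Group A] [Group B] [Group H] (f : A →* H) (g : B →* H) :
    Subgroup (A × B) where
  carrier := {z | f z.1 = g z.2}
  one_mem' := by simp
  mul_mem' := by
    intro a b ha hb
    simp only [Set.mem_setOf_eq, Prod.fst_mul, Prod.snd_mul, map_mul] at *
    rw [ha, hb]
  inv_mem' := by
    intro a ha
    simp only [Set.mem_setOf_eq, Prod.fst_inv, Prod.snd_inv, map_inv] at *
    rw [ha]

namespace GrpExt

variable {H V : Type} [Group H] [AddCommGroup V] {ρ : RAction H V}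

theorem snd_mul {γ : Cocycle ρ} (x y : GrpExt ρ γ) :
    (x * y).2 = ρ.act y.1 x.2 + y.2 + γ.f x.1 y.1 := rfl

def smulHom {p : ℕ} [Module (ZMod p) V] (r : ZMod p) (β : Cocycle ρ) :
    GrpExt ρ β →* GrpExt ρ (β.smul r) where
  toFun x := (x.1, r • x.2)
  map_one' := ext' rfl (smul_zero r)
  map_mul' x y := ext' rfl <| by
    change r • (x * y).2 = ρ.act y.1 (r • x.2) + r • y.2 + r • β.f x.1 y.1
    rw [snd_mul, smul_add, smul_add, ρ.act_smul]

theorem epsHom_comp_smulHom {p : ℕ} [Module (ZMod p) V] (r : ZMod p) (β : Cocycle ρ) :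
    (epsHom ρ (β.smul r)).comp (smulHom r β) = epsHom ρ β := rfl

end GrpExt

section Translate

variable {H V D : Type} [Group H] [AddCommGroup V] [Group D] {ρ : RAction H V}
  {α γ : Cocycle ρ} {f : D →* H}

def fiber2TranslateEquiv (ψ : D →* GrpExt ρ α) (hψ : (epsHom ρ α).comp ψ = f) :
    fiber2 f (epsHom ρ γ) ≃* fiber2 f (epsHom ρ (α.add γ)) where
  toFun z := ⟨(z.val.1, (z.val.2.1, (ψ z.val.1).2 + z.val.2.2)), z.prop⟩
  invFun z := ⟨(z.val.1, (z.val.2.1, -(ψ z.val.1).2 + z.val.2.2)), z.prop⟩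
  left_inv z := Subtype.ext <| Prod.ext rfl <| GrpExt.ext' rfl (neg_add_cancel_left _ _)
  right_inv z := Subtype.ext <| Prod.ext rfl <| GrpExt.ext' rfl (add_neg_cancel_left _ _)
  map_mul' x y := by
    have hψx : (ψ x.val.1).1 = x.val.2.1 := (DFunLike.congr_fun hψ x.val.1).trans x.prop
    have hψy : (ψ y.val.1).1 = y.val.2.1 := (DFunLike.congr_fun hψ y.val.1).trans y.prop
    refine Subtype.ext <| Prod.ext rfl <| GrpExt.ext' rfl ?_
    change (ψ (x.val.1 * y.val.1)).2 + (ρ.act y.val.2.1 x.val.2.2 + y.val.2.2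
        + γ.f x.val.2.1 y.val.2.1)
      = ρ.act y.val.2.1 ((ψ x.val.1).2 + x.val.2.2) + ((ψ y.val.1).2 + y.val.2.2)
        + (α.f x.val.2.1 y.val.2.1 + γ.f x.val.2.1 y.val.2.1)
    rw [map_mul, GrpExt.snd_mul, hψx, hψy, map_add]
    abel

theorem fiber2TranslateEquiv_apply_fst (ψ : D →* GrpExt ρ α) (hψ : (epsHom ρ α).comp ψ = f)
    (z : fiber2 f (epsHom ρ γ)) : (fiber2TranslateEquiv ψ hψ z).val.1 = z.val.1 := rfl

end Translate

theorem stmt_17_general (p : ℕ) (H V : Type) [Group H]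
    [AddCommGroup V] [Module (ZMod p) V] (ρ : RAction H V) (β γ : Cocycle ρ)
    (D : Type) [Group D] (π : D →* GrpExt ρ β) (r : ZMod p) :
    ∃ φ : fiber2 ((epsHom ρ β).comp π) (epsHom ρ γ) ≃*
          fiber2 ((epsHom ρ β).comp π) (epsHom ρ ((Cocycle.smul r β).add γ)),
      ∀ z : fiber2 ((epsHom ρ β).comp π) (epsHom ρ γ), (φ z).val.1 = z.val.1 := by
  have hlift :
      (epsHom ρ (β.smul r)).comp ((GrpExt.smulHom r β).comp π) = (epsHom ρ β).comp π := by
    rw [← MonoidHom.comp_assoc, GrpExt.epsHom_comp_smulHom]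
  exact ⟨fiber2TranslateEquiv _ hlift, fiber2TranslateEquiv_apply_fst _ hlift⟩

/-- Let `β, γ` be normalized 2-cocycles of `H` with values in the `ℤ_p[H]`-module `V`, let
`π : D → E_β` be a surjection, and `r ∈ ℤ_p`. Writing `P_δ` for the fiber product of `D`
and `E_δ` over `H` (w.r.t. `ε_β ∘ π` and `ε_δ`), there is a group isomorphism
`P_γ ≃ P_{rβ+γ}` commuting with the natural projections onto `D`. -/
theorem stmt_17 (p : ℕ) (hp : p.Prime) (H V : Type) [Group H] [Finite H]
    [AddCommGroup V] [Module (ZMod p) V] (ρ : RAction H V) (β γ : Cocycle ρ)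
    (D : Type) [Group D] (π : D →* GrpExt ρ β) (hπ : Function.Surjective π) (r : ZMod p) :
    ∃ φ : fiber2 ((epsHom ρ β).comp π) (epsHom ρ γ) ≃*
          fiber2 ((epsHom ρ β).comp π) (epsHom ρ ((Cocycle.smul r β).add γ)),
      ∀ z : fiber2 ((epsHom ρ β).comp π) (epsHom ρ γ), (φ z).val.1 = z.val.1 :=
  stmt_17_general p H V ρ β γ D π r
end

section
/- Let H be a finite group, p a prime, V a simple ℤ_p[H]-module, and π: E → H a surjective homomorphism of finite groups whose kernel K is abelian of exponent dividing p and, as ℤ_p[H]-module via conjugation, is V-homogeneous. Then there exist an integer n ≥ 0, normalized 2-cocycles γ_1, …, γ_n ∈ Z²(H,V) whose classes in H²(H,V) are ℤ_p-linearly independent, a finite group S with a surjective homomorphism π_S: S → H that admits a homomorphic section and whose kernel is abelian of exponent dividing p and V-homogeneous as ℤ_p[H]-module via conjugation, and an injective homomorphism ι: E → S × E_{γ_1} × … × E_{γ_n} whose image is exactly the fiber product over H with respect to π_S, ε_{γ_1}, …, ε_{γ_n}; in particular π equals the composition of ι with the natural projection of this fiber product onto H. -/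
/-- The kernel of `π : E → H` is, via the conjugation action, a `V`-homogeneous module:
it admits an additive bijection with a finite direct sum `V^m` of copies of `V` that is
`H`-equivariant (conjugation by `g` corresponds to the action of `π g`). -/
def IsVHomog {H V E : Type} [Group H] [AddCommGroup V] [Group E]
    (ρ : RAction H V) (π : E →* H) : Prop :=
  ∃ (m : ℕ) (φ : π.ker ≃ (Fin m → V)),
    (∀ a b : π.ker, φ (a * b) = φ a + φ b) ∧
    ∀ (g : E) (k : π.ker),
      φ ⟨g⁻¹ * (k : E) * g, by
          simpa using (MonoidHom.normal_ker π).conj_mem (k : E) k.2 g⁻¹⟩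
        = fun i => ρ.act (π g) (φ k i)

/-- `f` is a 2-coboundary: `f(g,h) = λ(g)^h + λ(h) - λ(gh)` for some `λ : H → V` with
`λ(1) = 0`. -/
def IsCoboundary {H V : Type} [Group H] [AddCommGroup V]
    (ρ : RAction H V) (f : H → H → V) : Prop :=
  ∃ lam : H → V, lam 1 = 0 ∧ ∀ g h : H, f g h = ρ.act h (lam g) + lam h - lam (g * h)

/-- A finite split extension of `H` with a `V`-homogeneous kernel: a finite group `S` with
a surjection `πS : S → H` admitting a homomorphic section, whose kernel is abelian of
exponent dividing `p` and `V`-homogeneous via conjugation. -/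
structure SplitVHomogData (p : ℕ) (H V : Type) [Group H] [AddCommGroup V]
    (ρ : RAction H V) where
  S : Type
  [grp : Group S]
  [fin : Finite S]
  πS : S →* H
  surj : Function.Surjective πS
  sec : ∃ s : H →* S, πS.comp s = MonoidHom.id H
  ker_comm : ∀ a b : πS.ker, a * b = b * a
  ker_exp : ∀ k : πS.ker, k ^ p = 1
  homog : IsVHomog ρ πS

attribute [instance] SplitVHomogData.grp SplitVHomogData.fin

/-!
Choose a section `σ` of `π` with `σ 1 = 1`. The coordinates `x ↦ (π x, φ (σ (π x)⁻¹ * x))`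
identify `E` with the cocycle extension `E_β` of `H` by `V^m`, where `β` is the factor set
`β(g,h) = φ (σ (g h)⁻¹ σ g σ h)`. Take a basis of `ℤ_p^m` whose last `k` vectors span the
coefficient vectors `c` with `∑ c_j β_j` a coboundary and whose first `n` vectors are independent
modulo them. The induced invertible change of coordinates on `V^m` turns `β` into a cocycle whose
last `k` components are coboundaries, so that they define a split extension `S`, and whose first
`n` components `γ_i` have independent classes. Splitting the coordinates of `V^(n+k)` then
exhibits `E_β ≅ E` as the fiber product of `S` and the `E_{γ_i}` over `H`.
-/

open Function

namespace RAction

variable {H V V' : Type} [Group H] [AddCommGroup V] [AddCommGroup V']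

def pi (ρ : RAction H V) (ι : Type) : RAction H (ι → V) where
  act h := (ρ.act h).compLeft ι
  act_one := by ext; simp [ρ.act_one]
  act_mul g h := by ext; simp [ρ.act_mul]

theorem pi_act_apply (ρ : RAction H V) {ι : Type} (h : H) (w : ι → V) (i : ι) :
    (ρ.pi ι).act h w i = ρ.act h (w i) := rfl

def Equivariant (ρ : RAction H V) (ρ' : RAction H V') (u : V →+ V') : Prop :=
  ∀ h v, u (ρ.act h v) = ρ'.act h (u v)

end RAction

namespace Cocycle

variable {H V V' : Type} [Group H] [AddCommGroup V] [AddCommGroup V']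
  {ρ : RAction H V} {ρ' : RAction H V'}

def map (u : V →+ V') (hu : ρ.Equivariant ρ' u) (β : Cocycle ρ) : Cocycle ρ' where
  f a b := u (β.f a b)
  cocyc a b c := by rw [← hu, ← map_add, β.cocyc, map_add]
  one_left h := by rw [β.one_left, map_zero]
  one_right h := by rw [β.one_right, map_zero]

variable {ι κ : Type}

def component (Γ : Cocycle (ρ.pi ι)) (s : ι) : Cocycle ρ :=
  Γ.map (Pi.evalAddMonoidHom (fun _ => V) s) fun _ _ => rfl

def restrict (Γ : Cocycle (ρ.pi ι)) (e : κ → ι) : Cocycle (ρ.pi κ) :=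
  Γ.map (AddMonoidHom.pi fun j => Pi.evalAddMonoidHom (fun _ => V) (e j)) fun _ _ => rfl

end Cocycle

namespace GrpExt

variable {H V V' : Type} [Group H] [AddCommGroup V] [AddCommGroup V']
  {ρ : RAction H V} {ρ' : RAction H V'}

def map (u : V →+ V') (hu : ρ.Equivariant ρ' u) (β : Cocycle ρ) :
    GrpExt ρ β →* GrpExt ρ' (β.map u hu) where
  toFun x := (x.1, u x.2)
  map_one' := ext' rfl (map_zero u)
  map_mul' x y := ext' rfl <| by
    show u (ρ.act y.1 x.2 + y.2 + β.f x.1 y.1) = ρ'.act y.1 (u x.2) + u y.2 + u (β.f x.1 y.1)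
    rw [map_add, map_add, hu]

theorem map_bijective {u : V →+ V'} (hu : ρ.Equivariant ρ' u) (β : Cocycle ρ)
    (hbij : Bijective u) : Bijective (map u hu β) :=
  bijective_id.prodMap hbij

variable {γ : Cocycle ρ}

theorem fst_mul_fst_eq_one {x y : GrpExt ρ γ} (hx : x.1 = 1) (hy : y.1 = 1) :
    (x * y).2 = x.2 + y.2 := by
  rw [mul_def]
  show ρ.act y.1 x.2 + y.2 + γ.f x.1 y.1 = _
  rw [hx, hy, ρ.act_one_apply, γ.one_left, add_zero]

def kerEquiv : (epsHom ρ γ).ker ≃* Multiplicative V where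
  toFun x := Multiplicative.ofAdd (x : GrpExt ρ γ).2
  invFun v := ⟨(1, v.toAdd), rfl⟩
  left_inv x := Subtype.ext (ext' x.2.symm rfl)
  right_inv _ := rfl
  map_mul' x y := congrArg Multiplicative.ofAdd (fst_mul_fst_eq_one x.2 y.2)

theorem snd_conj_of_fst_eq_one (g x : GrpExt ρ γ) (hx : x.1 = 1) :
    (g⁻¹ * x * g).2 = ρ.act g.1 x.2 := by
  set y := g⁻¹ * x * g
  have hy : y.1 = 1 := by
    show g.1⁻¹ * x.1 * g.1 = 1
    rw [hx, mul_one, inv_mul_cancel]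
  -- compare the second coordinates of `g * y = x * g`
  have hgy : (g * y).2 = (x * g).2 := by rw [show g * y = x * g by simp only [y]; group]
  rw [mul_def, mul_def] at hgy
  change ρ.act y.1 g.2 + y.2 + γ.f g.1 y.1 = ρ.act g.1 x.2 + g.2 + γ.f x.1 g.1 at hgy
  rw [hy, hx, ρ.act_one_apply, γ.one_right, γ.one_left, add_zero, add_zero, add_comm] at hgy
  exact add_right_cancel hgy

theorem ker_mul_comm (a b : (epsHom ρ γ).ker) : a * b = b * a :=
  kerEquiv.injective <| by rw [map_mul, map_mul, mul_comm]

theorem ker_pow_eq_one (p : ℕ) [Module (ZMod p) V] (x : (epsHom ρ γ).ker) : x ^ p = 1 :=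
  kerEquiv.injective <| by
    rw [map_pow, map_one, ← ofAdd_toAdd (kerEquiv x), ← ofAdd_nsmul,
      ZModModule.char_nsmul_eq_zero, ofAdd_zero]

theorem exists_section_of_isCoboundary (hγ : IsCoboundary ρ γ.f) :
    ∃ s : H →* GrpExt ρ γ, (epsHom ρ γ).comp s = MonoidHom.id H := by
  obtain ⟨lam, hlam1, hlam⟩ := hγ
  refine ⟨{ toFun := fun h => (h, -lam h)
            map_one' := ext' rfl (by rw [hlam1, neg_zero]; rfl)
            map_mul' := fun g h => ext' rfl ?_ }, MonoidHom.ext fun _ => rfl⟩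
  show -lam (g * h) = ρ.act h (-lam g) + -lam h + γ.f g h
  rw [hlam, map_neg]
  abel

end GrpExt

theorem MonoidHom.exists_rightInverse_map_one {E H : Type} [Group E] [Group H] {π : E →* H}
    (hπ : Surjective π) : ∃ σ : H → E, σ 1 = 1 ∧ ∀ h, π (σ h) = h := by
  classical
  obtain ⟨σ, hσ⟩ := hπ.hasRightInverse
  refine ⟨update σ 1 1, update_self _ _ _, fun h => ?_⟩
  rcases eq_or_ne h 1 with rfl | hh
  · rw [update_self, map_one]
  · rw [update_of_ne hh, hσ]

namespace FactorSet

variable {H E W : Type} [Group H] [Group E] {π : E →* H} (φ : π.ker ≃ W) {σ : H → E}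

theorem mem_ker (hσ : ∀ h, π (σ h) = h) (x : E) : (σ (π x))⁻¹ * x ∈ π.ker := by
  rw [MonoidHom.mem_ker, map_mul, map_inv, hσ, inv_mul_cancel]

def coord (hσ : ∀ h, π (σ h) = h) (x : E) : W := φ ⟨(σ (π x))⁻¹ * x, mem_ker hσ x⟩

theorem coord_section_mul (hσ : ∀ h, π (σ h) = h) (h : H) (k : π.ker) :
    coord φ hσ (σ h * k) = φ k := by
  refine congrArg φ (Subtype.ext ?_)
  show (σ (π (σ h * k)))⁻¹ * (σ h * k) = k
  rw [map_mul, hσ, k.2, mul_one, inv_mul_cancel_left]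

theorem coord_section [AddCommGroup W] (hφ : ∀ a b, φ (a * b) = φ a + φ b)
    (hσ : ∀ h, π (σ h) = h) (h : H) :
    coord φ hσ (σ h) = 0 := by
  have h1 : φ 1 = 0 := by simpa using hφ 1 1
  simpa [h1] using coord_section_mul φ hσ h 1

theorem coord_mul [AddCommGroup W] {ρ : RAction H W} (hφ : ∀ a b, φ (a * b) = φ a + φ b)
    (hconj : ∀ (g : E) (k : π.ker),
      φ ⟨g⁻¹ * k * g, π.normal_ker.conj_mem' _ k.2 g⟩ = ρ.act (π g) (φ k))
    (hσ : ∀ h, π (σ h) = h) (x y : E) :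
    coord φ hσ (x * y) = ρ.act (π y) (coord φ hσ x) + coord φ hσ y
      + coord φ hσ (σ (π x) * σ (π y)) := by
  have hx := hconj (σ (π y)) ⟨_, mem_ker hσ x⟩
  rw [hσ] at hx
  -- with `a = σ(πx)⁻¹ x`, `b = σ(πy)⁻¹ y`, `c = σ(πx πy)⁻¹ σ(πx) σ(πy)` in the kernel:
  -- `σ(πx πy)⁻¹ x y = c · σ(πy)⁻¹ a σ(πy) · b`
  have hsplit : coord φ hσ (x * y) = φ (⟨_, mem_ker hσ (σ (π x) * σ (π y))⟩ *
      ⟨_, π.normal_ker.conj_mem' _ (mem_ker hσ x) (σ (π y))⟩ * ⟨_, mem_ker hσ y⟩) := by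
    refine congrArg φ (Subtype.ext ?_)
    simp only [Subgroup.coe_mul, map_mul, hσ]
    group
  rw [hsplit, hφ, hφ, hx]
  unfold coord
  abel

variable [AddCommGroup W] {ρ : RAction H W} (hφ : ∀ a b, φ (a * b) = φ a + φ b)
  (hconj : ∀ (g : E) (k : π.ker),
    φ ⟨g⁻¹ * k * g, π.normal_ker.conj_mem' _ k.2 g⟩ = ρ.act (π g) (φ k))
  (hσ1 : σ 1 = 1) (hσ : ∀ h, π (σ h) = h)

def cocycle : Cocycle ρ where
  f g h := coord φ hσ (σ g * σ h)
  cocyc a b c := by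
    have h1 := coord_mul φ hφ hconj hσ (σ a * σ b) (σ c)
    have h2 := coord_mul φ hφ hconj hσ (σ a) (σ b * σ c)
    simp only [map_mul, hσ, coord_section φ hφ hσ, map_zero, add_zero, zero_add] at h1 h2
    rw [← h1, mul_assoc, h2]
  one_left h := by rw [hσ1, one_mul, coord_section φ hφ hσ]
  one_right h := by rw [hσ1, mul_one, coord_section φ hφ hσ]

def toGrpExt : E →* GrpExt ρ (cocycle φ hφ hconj hσ1 hσ) where
  toFun x := (π x, coord φ hσ x)
  map_one' := GrpExt.ext' (map_one π) <| by
    show coord φ hσ 1 = 0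
    simpa [hσ1] using coord_section φ hφ hσ 1
  map_mul' x y := GrpExt.ext' (map_mul π x y) (coord_mul φ hφ hconj hσ x y)

theorem toGrpExt_bijective : Bijective (toGrpExt φ hφ hconj hσ1 hσ) := by
  refine ⟨fun x y hxy => ?_, fun z => ⟨σ z.1 * φ.symm z.2, GrpExt.ext' ?_ ?_⟩⟩
  · have hπxy : π x = π y := congrArg Prod.fst hxy
    have hker := congrArg Subtype.val (φ.injective (congrArg Prod.snd hxy))
    simp only [hπxy] at hker
    exact mul_left_cancel hker
  · show π (σ z.1 * φ.symm z.2) = z.1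
    rw [map_mul, hσ, (φ.symm z.2).2, mul_one]
  · show coord φ hσ (σ z.1 * φ.symm z.2) = z.2
    rw [coord_section_mul, Equiv.apply_symm_apply]

end FactorSet

theorem MonoidHom.exists_mulEquiv_grpExt {H E W : Type} [Group H] [Group E] [AddCommGroup W]
    {ρ : RAction H W} {π : E →* H} (hπ : Surjective π) (φ : π.ker ≃ W)
    (hφ : ∀ a b, φ (a * b) = φ a + φ b)
    (hconj : ∀ (g : E) (k : π.ker),
      φ ⟨g⁻¹ * k * g, π.normal_ker.conj_mem' _ k.2 g⟩ = ρ.act (π g) (φ k)) :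
    ∃ (β : Cocycle ρ) (e : E ≃* GrpExt ρ β), ∀ x, epsHom ρ β (e x) = π x := by
  obtain ⟨σ, hσ1, hσ⟩ := MonoidHom.exists_rightInverse_map_one hπ
  exact ⟨_, MulEquiv.ofBijective _ (FactorSet.toGrpExt_bijective φ hφ hconj hσ1 hσ), fun _ => rfl⟩

section SplitExtension

variable {H V : Type} [Group H] [AddCommGroup V] {ρ : RAction H V}

theorem isCoboundary_pi {ι : Type} {f : H → H → ι → V}
    (hf : ∀ j, IsCoboundary ρ fun a b => f a b j) : IsCoboundary (ρ.pi ι) f := by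
  choose lam hlam1 hlam using hf
  exact ⟨fun g j => lam j g, funext hlam1, fun g h => funext fun j => hlam j g h⟩

def SplitVHomogData.ofCoboundary (p : ℕ) [Finite H] [Module (ZMod p) V] {k : ℕ}
    [Finite (Fin k → V)] (δ : Cocycle (ρ.pi (Fin k))) (hδ : IsCoboundary (ρ.pi (Fin k)) δ.f) :
    SplitVHomogData p H V ρ where
  S := GrpExt (ρ.pi (Fin k)) δ
  fin := inferInstanceAs (Finite (H × (Fin k → V)))
  πS := epsHom _ δ
  surj h := ⟨(h, 0), rfl⟩
  sec := GrpExt.exists_section_of_isCoboundary hδ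
  ker_comm := GrpExt.ker_mul_comm
  ker_exp := GrpExt.ker_pow_eq_one p
  homog := ⟨k, GrpExt.kerEquiv.toEquiv.trans Multiplicative.toAdd, fun a b => by simp,
    fun g x => GrpExt.snd_conj_of_fst_eq_one g x x.2⟩

end SplitExtension

section FiberProduct

variable {H V : Type} [Group H] [AddCommGroup V] {ρ : RAction H V} {ι κ : Type}
  (Γ : Cocycle (ρ.pi (ι ⊕ κ)))

def GrpExt.splitHom :
    GrpExt _ Γ →* GrpExt _ (Γ.restrict Sum.inr) × ∀ i, GrpExt ρ (Γ.component (Sum.inl i)) :=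
  (GrpExt.map _ _ Γ).prod (MonoidHom.pi fun _ => GrpExt.map _ _ Γ)

theorem GrpExt.splitHom_injective : Injective (GrpExt.splitHom Γ) := by
  intro x y hxy
  refine ext' (congrArg (fun z => z.1.1) hxy) (funext ?_)
  rintro (i | j)
  · exact congrArg (fun z => (z.2 i).2) hxy
  · exact congrArg (fun z => z.1.2 j) hxy

theorem GrpExt.range_splitHom :
    Set.range (GrpExt.splitHom Γ) = {z | ∀ i, epsHom ρ _ (z.2 i) = epsHom _ _ z.1} := by
  refine Set.Subset.antisymm (by rintro _ ⟨x, rfl⟩ _; rfl) fun z hz => ?_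
  exact ⟨(z.1.1, Sum.elim (fun i => (z.2 i).2) z.1.2),
    Prod.ext rfl (funext fun i => ext' (hz i).symm rfl)⟩

end FiberProduct

theorem Submodule.exists_basis_adapted {K M : Type} [Field K] [AddCommGroup M] [Module K M]
    [FiniteDimensional K M] (N : Submodule K M) :
    ∃ (n k : ℕ) (b : Module.Basis (Fin n ⊕ Fin k) K M),
      (∀ j, b (Sum.inr j) ∈ N) ∧ ∀ c : Fin n → K, ∑ i, c i • b (Sum.inl i) ∈ N → c = 0 := by
  obtain ⟨C, hC⟩ := N.exists_isCompl
  let bC := Module.finBasis K C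
  let bN := Module.finBasis K N
  let b := (bC.prod bN).map (C.prodEquivOfIsCompl N hC.symm)
  have hinl : ∀ i, b (Sum.inl i) = bC i := by simp [b, Submodule.coe_prodEquivOfIsCompl']
  have hinr : ∀ j, b (Sum.inr j) = bN j := by simp [b, Submodule.coe_prodEquivOfIsCompl']
  refine ⟨_, _, b, fun j => hinr j ▸ (bN j).2, fun c hc => ?_⟩
  have hcC : ∑ i, c i • b (Sum.inl i) ∈ C :=
    Submodule.sum_mem _ fun i _ => Submodule.smul_mem _ _ (hinl i ▸ (bC i).2)
  exact funext <| Fintype.linearIndependent_iff.mp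
    (b.linearIndependent.comp Sum.inl Sum.inl_injective) c
    (Submodule.disjoint_def.mp hC.disjoint _ hc hcC)

section MatrixMap

variable {V : Type} [AddCommGroup V] {p : ℕ} [Module (ZMod p) V] {ι κ ν : Type} [Fintype ι]

-- `w ↦ w ᵥ* P` for `V`-valued row vectors `w`
def matrixMap (P : Matrix ι κ (ZMod p)) : (ι → V) →+ (κ → V) where
  toFun w s := ∑ i, P i s • w i
  map_zero' := by ext; simp
  map_add' w w' := by ext; simp [smul_add, Finset.sum_add_distrib]

theorem matrixMap_apply (P : Matrix ι κ (ZMod p)) (w : ι → V) (s : κ) :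
    matrixMap P w s = ∑ i, P i s • w i := rfl

theorem matrixMap_mul [Fintype κ] (P : Matrix ι κ (ZMod p)) (Q : Matrix κ ν (ZMod p)) (w : ι → V) :
    matrixMap (P * Q) w = matrixMap Q (matrixMap P w) := by
  ext t
  simp only [matrixMap_apply, Matrix.mul_apply, Finset.sum_smul, Finset.smul_sum, mul_smul]
  rw [Finset.sum_comm]
  exact Finset.sum_congr rfl fun _ _ => Finset.sum_congr rfl fun _ _ => smul_comm _ _ _

theorem matrixMap_one [DecidableEq ι] (w : ι → V) : matrixMap (1 : Matrix ι ι (ZMod p)) w = w := by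
  ext s
  simp [matrixMap_apply, Matrix.one_apply, ite_smul]

theorem matrixMap_bijective [Fintype κ] [DecidableEq ι] [DecidableEq κ] {P : Matrix ι κ (ZMod p)}
    {Q : Matrix κ ι (ZMod p)} (hPQ : P * Q = 1) (hQP : Q * P = 1) :
    Bijective (matrixMap P : (ι → V) → (κ → V)) :=
  bijective_iff_has_inverse.mpr ⟨matrixMap Q,
    fun w => by rw [← matrixMap_mul, hPQ, matrixMap_one],
    fun w => by rw [← matrixMap_mul, hQP, matrixMap_one]⟩

theorem matrixMap_equivariant {H : Type} [Group H] (ρ : RAction H V) (P : Matrix ι κ (ZMod p)) :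
    (ρ.pi ι).Equivariant (ρ.pi κ) (matrixMap P) := fun h w => by
  ext s
  simp only [matrixMap_apply, RAction.pi_act_apply, map_sum, ρ.act_smul]

end MatrixMap

section Coboundaries

variable {H V : Type} [Group H] [AddCommGroup V] (p : ℕ) [Module (ZMod p) V]

def coboundaries (ρ : RAction H V) : Submodule (ZMod p) (H → H → V) where
  carrier := {f | IsCoboundary ρ f}
  zero_mem' := ⟨0, rfl, fun g h => by simp⟩
  add_mem' := by
    rintro f f' ⟨l, hl1, hl⟩ ⟨l', hl'1, hl'⟩
    refine ⟨l + l', by simp [hl1, hl'1], fun g h => ?_⟩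
    simp only [Pi.add_apply, hl g h, hl' g h, map_add]
    abel
  smul_mem' := by
    rintro r f ⟨l, hl1, hl⟩
    refine ⟨r • l, by simp [hl1], fun g h => ?_⟩
    simp only [Pi.smul_apply, hl g h, ρ.act_smul, smul_add, smul_sub]

variable {ρ : RAction H V}

theorem mem_coboundaries {f : H → H → V} : f ∈ coboundaries p ρ ↔ IsCoboundary ρ f := Iff.rfl

variable {ι : Type} [Fintype ι]

def Cocycle.linearCombination (β : Cocycle (ρ.pi ι)) : (ι → ZMod p) →ₗ[ZMod p] (H → H → V) :=
  Fintype.linearCombination (ZMod p) fun i a b => β.f a b i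

theorem Cocycle.component_map_matrixMap_toMatrix [DecidableEq ι] {κ : Type} [Fintype κ]
    (β : Cocycle (ρ.pi ι)) (b : Module.Basis κ (ZMod p) (ι → ZMod p)) (s : κ) :
    ((β.map (matrixMap ((Pi.basisFun (ZMod p) ι).toMatrix b))
      (matrixMap_equivariant ρ _)).component s).f = β.linearCombination p (b s) := by
  ext g h
  simp [Cocycle.component, Cocycle.map, Cocycle.linearCombination, matrixMap_apply,
    Module.Basis.toMatrix_apply, Fintype.linearCombination_apply, Finset.sum_apply]

end Coboundaries

theorem Cocycle.exists_map_sum_inr_isCoboundary {H V : Type} [Group H] [AddCommGroup V] {p : ℕ}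
    [Fact p.Prime] [Module (ZMod p) V] {ρ : RAction H V} {m : ℕ} (β : Cocycle (ρ.pi (Fin m))) :
    ∃ (n k : ℕ) (u : (Fin m → V) →+ (Fin n ⊕ Fin k → V))
      (hu : (ρ.pi _).Equivariant (ρ.pi _) u), Bijective u ∧
      (∀ j, IsCoboundary ρ ((β.map u hu).component (Sum.inr j)).f) ∧
      ∀ c : Fin n → ZMod p,
        IsCoboundary ρ (fun a b => ∑ i, c i • ((β.map u hu).component (Sum.inl i)).f a b) →
          c = 0 := by
  obtain ⟨n, k, b, hinr, hinl⟩ :=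
    ((coboundaries p ρ).comap (β.linearCombination p)).exists_basis_adapted
  have hcomp := β.component_map_matrixMap_toMatrix p b
  refine ⟨n, k, _, matrixMap_equivariant ρ _,
    matrixMap_bijective ((Pi.basisFun _ _).toMatrix_mul_toMatrix_flip b)
      (b.toMatrix_mul_toMatrix_flip (Pi.basisFun _ _)),
    fun j => hcomp _ ▸ hinr j, fun c hc => hinl c ?_⟩
  rw [Submodule.mem_comap, map_sum, mem_coboundaries]
  convert hc using 1
  ext g h
  simp only [Finset.sum_apply, map_smul, Pi.smul_apply, hcomp]

theorem stmt_18_general (p : ℕ) (hp : p.Prime) (H V : Type) [Group H] [Finite H]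
    [AddCommGroup V] [Module (ZMod p) V] (ρ : RAction H V)
    (E : Type) [Group E] [Finite E] (π : E →* H) (hπ : Function.Surjective π)
    (hhom : IsVHomog ρ π) :
    ∃ (n : ℕ) (γ : Fin n → Cocycle ρ),
      (∀ c : Fin n → ZMod p,
          IsCoboundary ρ (fun a b => ∑ i, c i • (γ i).f a b) → c = 0) ∧
      ∃ T : SplitVHomogData p H V ρ,
        ∃ ι : E →* T.S × (∀ i, GrpExt ρ (γ i)),
          Function.Injective ι ∧
          Set.range ι
            = {z : T.S × (∀ i, GrpExt ρ (γ i)) | ∀ i, epsHom ρ (γ i) (z.2 i) = T.πS z.1} ∧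
          ∀ x : E, π x = T.πS (ι x).1 := by
  have := Fact.mk hp
  obtain ⟨m, φ, hφ, hconj⟩ := hhom
  obtain ⟨β, e, he⟩ := π.exists_mulEquiv_grpExt (ρ := ρ.pi (Fin m)) hπ φ hφ hconj
  obtain ⟨n, k, u, hu, hbij, hcob, hindep⟩ := β.exists_map_sum_inr_isCoboundary (p := p)
  let Γ := β.map u hu
  let e' : E →* GrpExt _ Γ := (GrpExt.map u hu β).comp e.toMonoidHom
  have he' : Bijective e' := (GrpExt.map_bijective hu β hbij).comp e.bijective
  have : Finite (Fin m → V) := Finite.of_equiv _ φ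
  have : Finite (Fin n ⊕ Fin k → V) := Finite.of_surjective u hbij.2
  have : Finite (Fin k → V) :=
    Finite.of_surjective (fun w : Fin n ⊕ Fin k → V => w ∘ Sum.inr) fun w => ⟨Sum.elim 0 w, rfl⟩
  refine ⟨n, fun i => Γ.component (Sum.inl i), hindep,
    SplitVHomogData.ofCoboundary p (Γ.restrict Sum.inr) (isCoboundary_pi hcob),
    (GrpExt.splitHom Γ).comp e', (GrpExt.splitHom_injective Γ).comp he'.1,
    (he'.2.range_comp _).trans (GrpExt.range_splitHom Γ), fun x => (he x).symm⟩

/-- **Structure of extensions with a homogeneous module.** Every finite extension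
`π : E → H` with `V`-homogeneous kernel (with `V` a simple `ℤ_p[H]`-module) is a fiber
product, over `H`, of a split extension `S` with `V`-homogeneous kernel and extensions
`E_{γ_1}, …, E_{γ_n}` for cocycles `γ_i` whose cohomology classes are `ℤ_p`-linearly
independent. -/
theorem stmt_18 (p : ℕ) (hp : p.Prime) (H V : Type) [Group H] [Finite H]
    [AddCommGroup V] [Module (ZMod p) V] (ρ : RAction H V)
    (hsimple : (∃ v : V, v ≠ 0) ∧
      ∀ W : Submodule (ZMod p) V, (∀ h : H, ∀ w ∈ W, ρ.act h w ∈ W) → W = ⊥ ∨ W = ⊤)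
    (E : Type) [Group E] [Finite E] (π : E →* H) (hπ : Function.Surjective π)
    (hcomm : ∀ a b : π.ker, a * b = b * a) (hexp : ∀ k : π.ker, k ^ p = 1)
    (hhom : IsVHomog ρ π) :
    ∃ (n : ℕ) (γ : Fin n → Cocycle ρ),
      (∀ c : Fin n → ZMod p,
          IsCoboundary ρ (fun a b => ∑ i, c i • (γ i).f a b) → c = 0) ∧
      ∃ T : SplitVHomogData p H V ρ,
        ∃ ι : E →* T.S × (∀ i, GrpExt ρ (γ i)),
          Function.Injective ι ∧
          Set.range ι
            = {z : T.S × (∀ i, GrpExt ρ (γ i)) | ∀ i, epsHom ρ (γ i) (z.2 i) = T.πS z.1} ∧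
          ∀ x : E, π x = T.πS (ι x).1 :=
  stmt_18_general p hp H V ρ E π hπ hhom
end
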